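/- For ν-almost every 𝚒 ∈ {1,2}^ℕ (ν the Bernoulli(1/2,1/2) measure), the maximal run length of 2's satisfies lim_{n→∞} Z_n(𝚒)/log₂ n = 1, where Z_n(𝚒) is the length of the longest block of consecutive 2's in the first n symbols of 𝚒. -/

import Mathlib

/-!
A given block of `K` consecutive symbols consists of `2`s only with probability `2^{-K}`, so by a
union bound the first `2^r` symbols contain a run of length `r + r/c + 1` with probability at most
`2^{-r/c}`, which is summable in `r`. Conversely, the first `2^r` symbols contain `2^r / k` disjoint
blocks of length `k = r - r/c`; these are independent, so none of them consists of `2`s only with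
probability `(1 - 2^{-k})^{2^r/k} ≤ 2^{-r}` once `r² ≤ 2^{r/c}`. Borel–Cantelli for every `c` gives
`Z_{2^r} / r → 1` almost surely, and since `n ↦ Z_n` is monotone this interpolates to all `n`.
The cylinder hypothesis says exactly that `ν` is the infinite product of fair coins.
-/

open Set MeasureTheory Filter
open scoped ENNReal Topology

/-- `maxRun i n` is the length `Z_n(i)` of the longest block of consecutive symbols
`2` (coded by `1 : Fin 2`) among the first `n` symbols of `i`. -/
noncomputable def maxRun (i : ℕ → Fin 2) (n : ℕ) : ℕ :=
  sSup {k : ℕ | ∃ j : ℕ, j + k ≤ n ∧ ∀ m < k, i (j + m) = 1}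

lemma le_maxRun_iff {i : ℕ → Fin 2} {n k : ℕ} :
    k ≤ maxRun i n ↔ ∃ j, j + k ≤ n ∧ ∀ m < k, i (j + m) = 1 := by
  have hbdd : BddAbove {k : ℕ | ∃ j : ℕ, j + k ≤ n ∧ ∀ m < k, i (j + m) = 1} :=
    ⟨n, fun k ⟨j, hj, _⟩ => by omega⟩
  refine ⟨fun hk => ?_, fun ⟨j, hj, hrun⟩ => le_csSup hbdd ⟨j, hj, hrun⟩⟩
  obtain ⟨j, hj, hrun⟩ : maxRun i n ∈ {k : ℕ | ∃ j : ℕ, j + k ≤ n ∧ ∀ m < k, i (j + m) = 1} :=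
    Nat.sSup_mem ⟨0, 0, by simp⟩ hbdd
  exact ⟨j, by omega, fun m hm => hrun m (by omega)⟩

lemma maxRun_mono (i : ℕ → Fin 2) : Monotone (maxRun i) := fun _ _ hn =>
  le_maxRun_iff.2 <| (le_maxRun_iff.1 le_rfl).imp fun _ ⟨hj, hrun⟩ => ⟨hj.trans hn, hrun⟩

lemma tendsto_div_self_of_eventually_bounds {f : ℕ → ℕ}
    (h : ∀ᶠ c in atTop, ∀ᶠ r in atTop, r - r / c ≤ f r ∧ f r ≤ r + r / c) :
    Tendsto (fun r : ℕ => (f r : ℝ) / r) atTop (𝓝 1) := by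
  refine Metric.tendsto_nhds.2 fun ε hε => ?_
  obtain ⟨c, hc, hcε⟩ := (h.and (eventually_gt_atTop ⌈ε⁻¹⌉₊)).exists
  have hc0 : (0 : ℝ) < c := by exact_mod_cast (Nat.zero_le _).trans_lt hcε
  have hcε' : (c : ℝ)⁻¹ < ε := by
    rw [inv_lt_comm₀ hc0 hε]
    exact (Nat.le_ceil _).trans_lt (by exact_mod_cast hcε)
  filter_upwards [hc, eventually_gt_atTop 0] with r ⟨hlo, hhi⟩ hr
  have hr' : (0 : ℝ) < r := by exact_mod_cast hr
  have hq : ((r / c : ℕ) : ℝ) ≤ r / c := Nat.cast_div_le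
  have hdev : |(f r : ℝ) - r| ≤ r / c := by
    have h1 : (f r : ℝ) ≤ r + (r / c : ℕ) := by exact_mod_cast hhi
    have h2 : (r : ℝ) ≤ f r + (r / c : ℕ) := by exact_mod_cast (by omega : r ≤ f r + r / c)
    exact abs_sub_le_iff.2 ⟨by linarith, by linarith⟩
  rw [Real.dist_eq, div_sub_one hr'.ne', abs_div, abs_of_pos hr', div_lt_iff₀ hr']
  calc |(f r : ℝ) - r| ≤ r / c := hdev
    _ = (c : ℝ)⁻¹ * r := by ring
    _ < ε * r := by gcongr

lemma logb_lt_natLog_add_one (b n : ℕ) : Real.logb b n < Nat.log b n + 1 := by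
  simpa only [Real.natFloor_logb_natCast] using Nat.lt_floor_add_one (Real.logb b n)

lemma div_logb_mem_Icc_of_monotone {b : ℕ} (hb : 1 < b) {f : ℕ → ℕ} (hf : Monotone f) {n : ℕ}
    (hn : b ≤ n) :
    (f n : ℝ) / Real.logb b n ∈ Icc ((f (b ^ Nat.log b n) : ℝ) / (Nat.log b n + 1))
      ((f (b ^ (Nat.log b n + 1)) : ℝ) / Nat.log b n) := by
  have hr : (1 : ℝ) ≤ Nat.log b n := by exact_mod_cast Nat.le_log_of_pow_le hb (by simpa using hn)
  have hlo : (Nat.log b n : ℝ) ≤ Real.logb b n := Real.natLog_le_logb n b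
  have hhi := logb_lt_natLog_add_one b n
  constructor
  · calc (f (b ^ Nat.log b n) : ℝ) / (Nat.log b n + 1)
        ≤ f (b ^ Nat.log b n) / Real.logb b n :=
          div_le_div_of_nonneg_left (by positivity) (by linarith) hhi.le
      _ ≤ f n / Real.logb b n := by
          gcongr
          · linarith
          · exact hf (Nat.pow_log_le_self b (by omega))
  · calc (f n : ℝ) / Real.logb b n
        ≤ f (b ^ (Nat.log b n + 1)) / Real.logb b n := by
          gcongr
          · linarith
          · exact hf (Nat.lt_pow_succ_log_self hb n).le
      _ ≤ f (b ^ (Nat.log b n + 1)) / Nat.log b n :=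
          div_le_div_of_nonneg_left (by positivity) (by linarith) hlo

lemma tendsto_div_logb_of_tendsto_pow_div {b : ℕ} (hb : 1 < b) {f : ℕ → ℕ} (hf : Monotone f)
    {l : ℝ} (h : Tendsto (fun r : ℕ => (f (b ^ r) : ℝ) / r) atTop (𝓝 l)) :
    Tendsto (fun n : ℕ => (f n : ℝ) / Real.logb b n) atTop (𝓝 l) := by
  have hlog : Tendsto (Nat.log b) atTop atTop :=
    tendsto_atTop_atTop.2 fun r => ⟨b ^ r, fun n hn => Nat.le_log_of_pow_le hb hn⟩
  have hlo : Tendsto (fun r : ℕ => (f (b ^ r) : ℝ) / (r + 1)) atTop (𝓝 l) := by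
    have := h.mul (tendsto_natCast_div_add_atTop (1 : ℝ))
    rw [mul_one] at this
    refine this.congr' ?_
    filter_upwards [eventually_ne_atTop 0] with r hr
    field_simp
  have hhi : Tendsto (fun r : ℕ => (f (b ^ (r + 1)) : ℝ) / r) atTop (𝓝 l) := by
    have := (h.comp (tendsto_add_atTop_nat 1)).mul
      ((tendsto_natCast_div_add_atTop (1 : ℝ)).inv₀ one_ne_zero)
    rw [inv_one, mul_one] at this
    refine this.congr' ?_
    filter_upwards [eventually_ne_atTop 0] with r hr
    simp only [Function.comp_apply, Nat.cast_add, Nat.cast_one]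
    field_simp
  refine tendsto_of_tendsto_of_tendsto_of_le_of_le' (hlo.comp hlog) (hhi.comp hlog) ?_ ?_
  · filter_upwards [eventually_ge_atTop b] with n hn
    exact (div_logb_mem_Icc_of_monotone hb hf hn).1
  · filter_upwards [eventually_ge_atTop b] with n hn
    exact (div_logb_mem_Icc_of_monotone hb hf hn).2

theorem eq_infinitePi_of_measure_cylinder {α : Type*} [Fintype α] [MeasurableSpace α]
    [MeasurableSingletonClass α] {μ : ℕ → Measure α} [∀ k, IsProbabilityMeasure (μ k)]
    {ν : Measure (ℕ → α)}
    (h : ∀ (n : ℕ) (w : Fin n → α), ν {x | ∀ k : Fin n, x k = w k} = ∏ k : Fin n, μ k {w k}) :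
    ν = Measure.infinitePi μ := by
  classical
  refine Measure.eq_infinitePi μ fun s t _ => ?_
  obtain ⟨n, hn⟩ : ∃ n, ∀ k ∈ s, k < n :=
    ⟨s.sup id + 1, fun k hk => Nat.lt_succ_of_le (Finset.le_sup (f := id) hk)⟩
  set R : (k : Fin n) → Finset α := fun k => if (k : ℕ) ∈ s then (t k).toFinset else .univ
  have hpi : (s : Set ℕ).pi t = (fun x (k : Fin n) => x k) ⁻¹' Fintype.piFinset R := by
    ext x
    simp only [Set.mem_pi, Finset.mem_coe, mem_preimage, Fintype.coe_piFinset, R]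
    constructor
    · intro hx k
      split_ifs with hk <;> simp [hx k, hk]
    · intro hx k hk
      simpa [hk] using hx ⟨k, hn k hk⟩
  have hfiber (w : Fin n → α) :
      (fun (x : ℕ → α) (k : Fin n) => x k) ⁻¹' {w} = {x | ∀ k : Fin n, x k = w k} := by
    ext x; simp [funext_iff]
  rw [hpi, ← sum_measure_preimage_singleton _ fun w _ =>
      measurable_pi_lambda _ (fun k => measurable_pi_apply _) (measurableSet_singleton w)]
  simp_rw [hfiber, h]
  rw [← Finset.prod_univ_sum R fun k a => μ k {a}]
  simp_rw [sum_measure_singleton]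
  rw [Finset.prod_congr rfl fun (k : Fin n) _ =>
    show μ k (R k) = if (k : ℕ) ∈ s then μ k (t k) else 1 by split_ifs <;> simp [R, *]]
  rw [Fin.prod_univ_eq_prod_range (fun k => if k ∈ s then μ k (t k) else 1), Finset.prod_ite_mem,
    Finset.inter_eq_right.2 fun k hk => Finset.mem_range.2 (hn k hk)]

section IdenticalFactors

variable {α : Type*} [MeasurableSpace α] (μ : Measure α) [IsProbabilityMeasure μ]

lemma infinitePi_setOf_forall_add_mem {t : Set α} (ht : MeasurableSet t) (j K : ℕ) :
    Measure.infinitePi (fun _ : ℕ => μ) {x | ∀ m < K, x (j + m) ∈ t} = μ t ^ K := by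
  have : {x : ℕ → α | ∀ m < K, x (j + m) ∈ t} =
      (((Finset.range K).map (addLeftEmbedding j) : Finset ℕ) : Set ℕ).pi fun _ => t := by
    ext x; simp
  rw [this, Measure.infinitePi_pi _ fun _ _ => ht, Finset.prod_const, Finset.card_map,
    Finset.card_range]

lemma infinitePi_setOf_forall_block_mem {k : ℕ} [NeZero k] {T : Set (Fin k → α)}
    (hT : MeasurableSet T) (B : ℕ) :
    Measure.infinitePi (fun _ : ℕ => μ) {x | ∀ b < B, (fun m : Fin k => x (b * k + m)) ∈ T} =
      Measure.pi (fun _ => μ) T ^ B := by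
  let e := MeasurableEquiv.piCongrLeft (fun _ : ℕ => α) (Nat.divModEquiv k).symm
  let blocks := (MeasurableEquiv.curry ℕ (Fin k) α).symm.trans e |>.symm
  have he : (Measure.infinitePi fun _ : ℕ => μ).map e.symm =
      Measure.infinitePi fun _ : ℕ × Fin k => μ := by
    rw [MeasurableEquiv.map_apply_eq_iff_map_symm_apply_eq, MeasurableEquiv.symm_symm]
    exact (Measure.infinitePi_map_piCongrLeft (fun _ => μ) _).symm
  have hmap : (Measure.infinitePi fun _ : ℕ => μ).map blocks =
      Measure.infinitePi fun _ : ℕ => Measure.infinitePi fun _ : Fin k => μ := by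
    rw [show ⇑blocks = MeasurableEquiv.curry ℕ (Fin k) α ∘ e.symm from rfl,
      ← Measure.map_map (by fun_prop) (by fun_prop), he]
    exact Measure.infinitePi_map_curry fun _ _ => μ
  have hset : {x : ℕ → α | ∀ b < B, (fun m : Fin k => x (b * k + m)) ∈ T} =
      blocks ⁻¹' ((Finset.range B : Set ℕ).pi fun _ => T) := by
    ext x
    simp only [mem_preimage, Set.mem_pi, Finset.coe_range, Set.mem_Iio]
    rfl
  rw [hset, ← blocks.map_apply, hmap, Measure.infinitePi_pi _ fun _ _ => hT,
    Measure.infinitePi_eq_pi, Finset.prod_const, Finset.card_range]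

end IdenticalFactors

lemma one_sub_inv_two_pow_pow_le (k : ℕ) : (1 - 2⁻¹ ^ k : ℝ≥0∞) ^ 2 ^ k ≤ 2⁻¹ := by
  have key : (1 - ((2 : ℝ) ^ k)⁻¹) ^ 2 ^ k ≤ 2⁻¹ := by
    have h1 := Real.one_sub_div_pow_le_exp_neg (n := 2 ^ k) (t := 1)
      (by exact_mod_cast Nat.one_le_two_pow)
    have h2 := Real.exp_neg_one_lt_half
    push_cast at h1
    rw [one_div] at h1 h2
    linarith
  have : (1 - 2⁻¹ ^ k : ℝ≥0∞) = ENNReal.ofReal (1 - ((2 : ℝ) ^ k)⁻¹) := by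
    rw [ENNReal.ofReal_sub _ (by positivity), ENNReal.ofReal_one,
      ENNReal.ofReal_inv_of_pos (by positivity), ENNReal.ofReal_pow zero_le_two,
      ENNReal.ofReal_ofNat, ENNReal.inv_pow]
  rw [this, ← ENNReal.ofReal_pow (by simp [inv_le_one_of_one_le₀, one_le_pow₀]),
    ← ENNReal.ofReal_ofNat 2, ← ENNReal.ofReal_inv_of_pos two_pos]
  exact ENNReal.ofReal_le_ofReal key

lemma eventually_mul_self_le_two_pow_div {c : ℕ} (hc : c ≠ 0) :
    ∀ᶠ r in atTop, r * r ≤ 2 ^ (r / c) := by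
  have hq : ∀ᶠ q : ℕ in atTop, (c * (q + 1)) ^ 2 ≤ 2 ^ q := by
    have h := (tendsto_pow_const_div_const_pow_of_one_lt 2 one_lt_two).comp
      (tendsto_add_atTop_nat 1)
    have hc' : (0 : ℝ) < c := by exact_mod_cast Nat.pos_of_ne_zero hc
    filter_upwards [h.eventually (gt_mem_nhds (by positivity : (0 : ℝ) < (2 * (c : ℝ) ^ 2)⁻¹))]
      with q hq
    simp only [Function.comp_apply, Nat.cast_add, Nat.cast_one] at hq
    rw [div_lt_iff₀ (by positivity),
      show (2 * (c : ℝ) ^ 2)⁻¹ * 2 ^ (q + 1) = (2 : ℝ) ^ q / (c : ℝ) ^ 2 by field_simp; ring,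
      lt_div_iff₀ (by positivity)] at hq
    exact_mod_cast (by rw [mul_pow]; linarith : ((c : ℝ) * (q + 1)) ^ 2 ≤ 2 ^ q)
  filter_upwards [(Nat.tendsto_div_const_atTop hc).eventually hq] with r hr
  have := Nat.lt_mul_div_succ r (Nat.pos_of_ne_zero hc)
  calc r * r ≤ (c * (r / c + 1)) ^ 2 := by nlinarith
    _ ≤ 2 ^ (r / c) := hr

lemma tsum_inv_two_pow_div_ne_top {c : ℕ} (hc : c ≠ 0) :
    ∑' r : ℕ, (2⁻¹ : ℝ≥0∞) ^ (r / c) ≠ ∞ := by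
  have : NeZero c := ⟨hc⟩
  have hdiv (p : ℕ × Fin c) : (Nat.divModEquiv c).symm p / c = p.1 :=
    congrArg Prod.fst ((Nat.divModEquiv c).apply_symm_apply p)
  rw [← (Nat.divModEquiv c).symm.tsum_eq]
  simp_rw [hdiv]
  simp [ENNReal.tsum_prod', ENNReal.tsum_mul_left, ENNReal.tsum_geometric, ENNReal.mul_eq_top]

lemma ae_eventually_notMem_of_eventually_le {Ω : Type*} [MeasurableSpace Ω] {μ : Measure Ω}
    {s : ℕ → Set Ω} {b : ℕ → ℝ≥0∞} (hb : ∑' r, b r ≠ ∞)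
    (h : ∀ᶠ r in atTop, μ (s r) ≤ b r) : ∀ᵐ ω ∂μ, ∀ᶠ r in atTop, ω ∉ s r := by
  classical
  obtain ⟨N, hN⟩ := eventually_atTop.1 h
  have hsum : ∑' r, μ (if N ≤ r then s r else ∅) ≠ ∞ :=
    ne_top_of_le_ne_top hb <| ENNReal.tsum_le_tsum fun r => by
      split_ifs with hr
      · exact hN r hr
      · simp
  filter_upwards [ae_eventually_notMem hsum] with ω hω
  filter_upwards [hω, eventually_ge_atTop N] with r hr hNr
  simpa [hNr] using hr

noncomputable def fairCoin : Measure (Fin 2) := (PMF.uniformOfFintype (Fin 2)).toMeasure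

instance : IsProbabilityMeasure fairCoin := by unfold fairCoin; infer_instance

lemma fairCoin_singleton (a : Fin 2) : fairCoin {a} = 2⁻¹ := by
  simp [fairCoin]

local notation "ℙ" => Measure.infinitePi fun _ : ℕ => fairCoin

lemma measure_le_maxRun_le (n : ℕ) {K : ℕ} (hK : 0 < K) :
    ℙ {i | K ≤ maxRun i n} ≤ n * 2⁻¹ ^ K := by
  calc ℙ {i | K ≤ maxRun i n}
      ≤ ℙ (⋃ j ∈ Finset.range n, {i | ∀ m < K, i (j + m) ∈ ({1} : Set (Fin 2))}) := by
        refine measure_mono fun i hi => ?_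
        obtain ⟨j, hj, hrun⟩ := le_maxRun_iff.1 hi
        exact mem_iUnion₂.2 ⟨j, Finset.mem_range.2 (by omega), hrun⟩
    _ ≤ ∑ j ∈ Finset.range n, ℙ {i | ∀ m < K, i (j + m) ∈ ({1} : Set (Fin 2))} :=
        measure_biUnion_finset_le _ _
    _ = n * 2⁻¹ ^ K := by
        rw [Finset.sum_congr rfl fun j _ =>
          infinitePi_setOf_forall_add_mem _ (measurableSet_singleton 1) j K]
        simp [fairCoin_singleton]

lemma measure_maxRun_lt_le (n : ℕ) {k : ℕ} [NeZero k] :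
    ℙ {i | maxRun i n < k} ≤ (1 - 2⁻¹ ^ k) ^ (n / k) := by
  calc ℙ {i | maxRun i n < k}
      ≤ ℙ {i | ∀ b < n / k, (fun m : Fin k => i (b * k + m)) ∈ ({fun _ => 1} : Set _)ᶜ} := by
        refine measure_mono fun i hi b hb hblock => ?_
        have : b * k + k ≤ n :=
          calc b * k + k = (b + 1) * k := by ring
            _ ≤ n / k * k := Nat.mul_le_mul_right k hb
            _ ≤ n := Nat.div_mul_le_self n k
        exact (not_le.2 hi) (le_maxRun_iff.2 ⟨b * k, this, fun m hm => congrFun hblock ⟨m, hm⟩⟩)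
    _ = (1 - 2⁻¹ ^ k) ^ (n / k) := by
        rw [infinitePi_setOf_forall_block_mem _ (measurableSet_singleton _).compl,
          prob_compl_eq_one_sub (measurableSet_singleton _)]
        simp [fairCoin_singleton]

lemma ae_eventually_maxRun_two_pow_le {c : ℕ} (hc : c ≠ 0) :
    ∀ᵐ i ∂ℙ, ∀ᶠ r in atTop, maxRun i (2 ^ r) ≤ r + r / c := by
  have hbound (r : ℕ) : ℙ {i | r + r / c + 1 ≤ maxRun i (2 ^ r)} ≤ 2⁻¹ ^ (r / c) :=
    calc ℙ {i | r + r / c + 1 ≤ maxRun i (2 ^ r)}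
        ≤ (2 ^ r : ℕ) * 2⁻¹ ^ (r + r / c + 1) := measure_le_maxRun_le _ (Nat.succ_pos _)
      _ = (2 * 2⁻¹) ^ r * 2⁻¹ ^ (r / c) * 2⁻¹ := by push_cast; ring
      _ ≤ 2⁻¹ ^ (r / c) := by
        rw [ENNReal.mul_inv_cancel two_ne_zero ENNReal.ofNat_ne_top, one_pow, one_mul]
        exact mul_le_of_le_one_right' (by norm_num)
  filter_upwards [ae_eventually_notMem_of_eventually_le (tsum_inv_two_pow_div_ne_top hc)
    (Eventually.of_forall hbound)] with i hi
  filter_upwards [hi] with r hr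
  exact Nat.lt_succ_iff.1 (not_le.1 hr)

lemma ae_eventually_le_maxRun_two_pow {c : ℕ} (hc : 2 ≤ c) :
    ∀ᵐ i ∂ℙ, ∀ᶠ r in atTop, r - r / c ≤ maxRun i (2 ^ r) := by
  have hbound : ∀ᶠ r in atTop, ℙ {i | maxRun i (2 ^ r) < r - r / c} ≤ 2⁻¹ ^ r := by
    filter_upwards [eventually_mul_self_le_two_pow_div (by omega : c ≠ 0), eventually_gt_atTop 0]
      with r hgrow hr
    have hk : 0 < r - r / c := Nat.sub_pos_of_lt (Nat.div_lt_self hr hc)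
    have : NeZero (r - r / c) := ⟨hk.ne'⟩
    have hblocks : r * 2 ^ (r - r / c) ≤ 2 ^ r / (r - r / c) := by
      rw [Nat.le_div_iff_mul_le hk]
      calc r * 2 ^ (r - r / c) * (r - r / c) ≤ r * r * 2 ^ (r - r / c) := by
            rw [mul_right_comm]; gcongr; exact Nat.sub_le _ _
        _ ≤ 2 ^ (r / c) * 2 ^ (r - r / c) := by gcongr
        _ = 2 ^ r := by rw [← pow_add, Nat.add_sub_cancel' (Nat.div_le_self r c)]
    calc ℙ {i | maxRun i (2 ^ r) < r - r / c}
        ≤ (1 - 2⁻¹ ^ (r - r / c)) ^ (2 ^ r / (r - r / c)) := measure_maxRun_lt_le _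
      _ ≤ (1 - 2⁻¹ ^ (r - r / c)) ^ (r * 2 ^ (r - r / c)) :=
        pow_le_pow_right_of_le_one' tsub_le_self hblocks
      _ = ((1 - 2⁻¹ ^ (r - r / c)) ^ 2 ^ (r - r / c)) ^ r := by rw [← pow_mul, mul_comm]
      _ ≤ 2⁻¹ ^ r := by gcongr; exact one_sub_inv_two_pow_pow_le _
  filter_upwards [ae_eventually_notMem_of_eventually_le
    (by simp [ENNReal.tsum_geometric] : ∑' r : ℕ, (2⁻¹ : ℝ≥0∞) ^ r ≠ ∞) hbound] with i hi
  filter_upwards [hi] with r hr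
  exact not_lt.1 hr

lemma ae_tendsto_maxRun_two_pow_div :
    ∀ᵐ i ∂ℙ, Tendsto (fun r : ℕ => (maxRun i (2 ^ r) : ℝ) / r) atTop (𝓝 1) := by
  have hlo := ae_all_iff.2 fun c : ℕ => ae_eventually_le_maxRun_two_pow (c := c + 2) (by omega)
  have hup := ae_all_iff.2 fun c : ℕ => ae_eventually_maxRun_two_pow_le (c := c + 2) (by omega)
  filter_upwards [hlo, hup] with i hlo hup
  refine tendsto_div_self_of_eventually_bounds (f := fun r => maxRun i (2 ^ r)) ?_
  filter_upwards [eventually_ge_atTop 2] with c hc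
  obtain ⟨c, rfl⟩ := Nat.exists_eq_add_of_le' hc
  exact (hlo c).and (hup c)

theorem stmt_13_general (ν : Measure (ℕ → Fin 2))
    (hcyl : ∀ (n : ℕ) (w : Fin n → Fin 2),
      ν {i | ∀ k : Fin n, i k = w k} = ((2:ℝ≥0∞)⁻¹) ^ n) :
    ∀ᵐ i ∂ν, Tendsto (fun n : ℕ => (maxRun i n : ℝ) / Real.logb 2 n)
      atTop (𝓝 1) := by
  obtain rfl : ν = ℙ := eq_infinitePi_of_measure_cylinder fun n w => by
    simp [hcyl, fairCoin_singleton]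
  filter_upwards [ae_tendsto_maxRun_two_pow_div] with i hi
  exact_mod_cast tendsto_div_logb_of_tendsto_pow_div one_lt_two (maxRun_mono i) hi

/-- Erdős–Révész law for the longest run: if `ν` is the Bernoulli(1/2,1/2) measure
on `{1,2}^ℕ`, then for `ν`-a.e. `𝚒`, `Z_n(𝚒)/log₂ n → 1` as `n → ∞`. -/
theorem stmt_13 (ν : Measure (ℕ → Fin 2)) (hprob : IsProbabilityMeasure ν)
    (hcyl : ∀ (n : ℕ) (w : Fin n → Fin 2),
      ν {i | ∀ k : Fin n, i k = w k} = ((2:ℝ≥0∞)⁻¹) ^ n) :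
    ∀ᵐ i ∂ν, Tendsto (fun n : ℕ => (maxRun i n : ℝ) / Real.logb 2 n)
      atTop (𝓝 1) :=
  stmt_13_general ν hcyl
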